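/- arXiv:2012.12264 — 7 statements merged into one kernel-verified Lean document; each statement's English description precedes it below -/
import Mathlib

section
/- Let c ∈ ℝ^n, A ∈ ℝ^{m×n}, and b ∈ ℝ^m. There exists λ₀ > 0 such that for every λ ≥ λ₀, every feasible binary point x and every infeasible binary point y satisfy cᵀx + λ(Ax − b)ᵀ(Ax − b) < cᵀy + λ(Ay − b)ᵀ(Ay − b); that is, any feasible solution of the binary linear program yields a strictly smaller penalized objective value than any binary infeasible solution. -/
/-- There exists λ₀ > 0 such that for every λ ≥ λ₀, every feasible binary
point has a strictly smaller penalized objective `cᵀx + λ(Ax − b)ᵀ(Ax − b)` than every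
infeasible binary point. -/
theorem qubo_penalized_feasible_lt_infeasible {m n : ℕ}
    (c : Fin n → ℝ) (A : Matrix (Fin m) (Fin n) ℝ) (b : Fin m → ℝ) :
    ∃ lam₀ : ℝ, 0 < lam₀ ∧ ∀ lam : ℝ, lam₀ ≤ lam →
      ∀ x y : Fin n → ℝ, (∀ i, x i = 0 ∨ x i = 1) → (∀ i, y i = 0 ∨ y i = 1) →
        A.mulVec x = b → A.mulVec y ≠ b →
        (∑ i, c i * x i) + lam * ∑ j, (A.mulVec x j - b j) ^ 2 <
          (∑ i, c i * y i) + lam * ∑ j, (A.mulVec y j - b j) ^ 2 := by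
  classical
  set pen : (Fin n → ℝ) → ℝ := fun z => ∑ j, (A.mulVec z j - b j) ^ 2 with hpen
  set T : Finset ℝ := ((Finset.univ : Finset (Fin n → Bool)).image
      (fun g => pen (fun i => if g i then (1:ℝ) else 0))).filter (fun t => 0 < t) with hT
  have hδ : ∃ δ : ℝ, 0 < δ ∧ ∀ t ∈ T, δ ≤ t := by
    by_cases hne : T.Nonempty
    · refine ⟨T.min' hne, ?_, fun t ht => T.min'_le t ht⟩
      have := T.min'_mem hne
      exact (Finset.mem_filter.mp this).2
    · exact ⟨1, one_pos, fun t ht => absurd ⟨t, ht⟩ hne⟩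
  obtain ⟨δ, hδpos, hδle⟩ := hδ
  set C : ℝ := ∑ i, |c i| with hC
  have hCnonneg : 0 ≤ C := Finset.sum_nonneg fun i _ => abs_nonneg _
  refine ⟨(2 * C + 1) / δ, div_pos (by linarith) hδpos, ?_⟩
  intro lam hlam x y hx hy hxfeas hyinfeas
  -- pen y ∈ T
  have hpenpos : 0 < pen y := by
    have hne : ∃ j, A.mulVec y j ≠ b j := by
      by_contra h
      push_neg at h
      exact hyinfeas (funext h)
    obtain ⟨j, hj⟩ := hne
    have hj' : A.mulVec y j - b j ≠ 0 := sub_ne_zero.mpr hj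
    have : 0 < (A.mulVec y j - b j) ^ 2 := by positivity
    refine Finset.sum_pos' (fun k _ => by positivity) ⟨j, Finset.mem_univ j, this⟩
  have hyT : pen y ∈ T := by
    rw [hT]
    refine Finset.mem_filter.mpr ⟨?_, hpenpos⟩
    refine Finset.mem_image.mpr ⟨fun i => y i = 1, Finset.mem_univ _, ?_⟩
    congr 1
    funext i
    rcases hy i with h | h <;> simp [h]
  have hδy : δ ≤ pen y := hδle _ hyT
  -- bounds on linear parts
  have hbound : ∀ z : Fin n → ℝ, (∀ i, z i = 0 ∨ z i = 1) →
      |∑ i, c i * z i| ≤ C := by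
    intro z hz
    calc |∑ i, c i * z i| ≤ ∑ i, |c i * z i| := Finset.abs_sum_le_sum_abs _ _
      _ ≤ ∑ i, |c i| := by
          refine Finset.sum_le_sum fun i _ => ?_
          rw [abs_mul]
          rcases hz i with h | h <;> simp [h]
  have hx1 := abs_le.mp (hbound x hx)
  have hy1 := abs_le.mp (hbound y hy)
  have hpenx : pen x = 0 := by
    rw [hpen]
    simp [hxfeas]
  have hlampos : 0 < lam := lt_of_lt_of_le (div_pos (by linarith) hδpos) hlam
  have key : 2 * C + 1 ≤ lam * pen y := by
    have h1 : (2 * C + 1) / δ * δ ≤ lam * pen y := by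
      apply mul_le_mul hlam hδy (le_of_lt hδpos) (le_of_lt hlampos)
    rwa [div_mul_cancel₀ _ (ne_of_gt hδpos)] at h1
  show (∑ i, c i * x i) + lam * pen x < (∑ i, c i * y i) + lam * pen y
  rw [hpenx]
  linarith [hx1.2, hy1.1]
end

section
/- Let c ∈ ℝ^n, A ∈ ℝ^{m×n}, and b ∈ ℝ^m, and suppose the feasible set {x ∈ {0,1}^n : Ax = b} is nonempty. Then there exists λ₀ > 0 such that for every λ ≥ λ₀, the minimum of the penalized objective cᵀx + λ(Ax − b)ᵀ(Ax − b) over all binary points x ∈ {0,1}^n equals the minimum of cᵀx over all feasible binary points. -/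
/-- If the feasible set of the binary linear program is nonempty, then there
exists λ₀ > 0 such that for every λ ≥ λ₀ the minimum of the penalized objective over all
binary points equals the minimum of `cᵀx` over all feasible binary points. -/
theorem qubo_penalized_min_eq_constrained_min {m n : ℕ}
    (c : Fin n → ℝ) (A : Matrix (Fin m) (Fin n) ℝ) (b : Fin m → ℝ)
    (hfeas : ∃ x : Fin n → ℝ, (∀ i, x i = 0 ∨ x i = 1) ∧ A.mulVec x = b) :
    ∃ lam₀ : ℝ, 0 < lam₀ ∧ ∀ lam : ℝ, lam₀ ≤ lam →
      sInf {v : ℝ | ∃ x : Fin n → ℝ, (∀ i, x i = 0 ∨ x i = 1) ∧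
          v = (∑ i, c i * x i) + lam * ∑ j, (A.mulVec x j - b j) ^ 2} =
        sInf {v : ℝ | ∃ x : Fin n → ℝ, (∀ i, x i = 0 ∨ x i = 1) ∧ A.mulVec x = b ∧
          v = ∑ i, c i * x i} := by
  classical
  obtain ⟨x₀, hx₀bin, hx₀feas⟩ := hfeas
  set g : (Fin n → Bool) → (Fin n → ℝ) := fun f i => if f i then 1 else 0 with hg
  have hbin : ∀ f i, g f i = 0 ∨ g f i = 1 := by
    intro f i; by_cases h : f i <;> simp [g, h]
  have hrep : ∀ x : Fin n → ℝ, (∀ i, x i = 0 ∨ x i = 1) → ∃ f, g f = x := by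
    intro x hx
    refine ⟨fun i => if x i = 1 then true else false, ?_⟩
    funext i
    rcases hx i with h | h <;> simp [g, h]
  set obj : (Fin n → Bool) → ℝ := fun f => ∑ i, c i * g f i with hobj
  set pen : (Fin n → Bool) → ℝ := fun f => ∑ j, (A.mulVec (g f) j - b j) ^ 2 with hpen
  have hpen_nonneg : ∀ f, 0 ≤ pen f := fun f => Finset.sum_nonneg fun j _ => sq_nonneg _
  have hpen_zero : ∀ f, pen f = 0 → A.mulVec (g f) = b := by
    intro f h
    funext j
    have h1 := (Finset.sum_eq_zero_iff_of_nonneg (fun j _ => sq_nonneg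
      (A.mulVec (g f) j - b j))).1 h j (Finset.mem_univ j)
    have h2 : A.mulVec (g f) j - b j = 0 := by
      have := sq_eq_zero_iff.1 h1
      exact this
    linarith
  set T : Set ℝ := {v : ℝ | ∃ x : Fin n → ℝ, (∀ i, x i = 0 ∨ x i = 1) ∧ A.mulVec x = b ∧
      v = ∑ i, c i * x i} with hT
  have hTsub : T ⊆ Set.range obj := by
    rintro v ⟨x, hx, hAx, rfl⟩
    obtain ⟨f, hf⟩ := hrep x hx
    exact ⟨f, by simp [obj, hf]⟩
  have hTfin : T.Finite := (Set.finite_range obj).subset hTsub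
  have hTne : T.Nonempty := ⟨∑ i, c i * x₀ i, x₀, hx₀bin, hx₀feas, rfl⟩
  set M : ℝ := sInf T with hM
  have hM_le : ∀ f, A.mulVec (g f) = b → M ≤ obj f := by
    intro f hf
    exact csInf_le hTfin.bddBelow ⟨g f, hbin f, hf, rfl⟩
  set lam₀ : ℝ := 1 + ∑ f : (Fin n → Bool), max 0 ((M - obj f) / pen f) with hlam₀
  have hlam₀_pos : 0 < lam₀ := by
    have : (0:ℝ) ≤ ∑ f : (Fin n → Bool), max 0 ((M - obj f) / pen f) :=
      Finset.sum_nonneg fun f _ => le_max_left _ _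
    rw [hlam₀]; linarith
  have hlam₀_ge : ∀ f, (M - obj f) / pen f ≤ lam₀ := by
    intro f
    have h1 : (M - obj f) / pen f ≤ max 0 ((M - obj f) / pen f) := le_max_right _ _
    have h2 : max 0 ((M - obj f) / pen f) ≤
        ∑ f : (Fin n → Bool), max 0 ((M - obj f) / pen f) :=
      Finset.single_le_sum (f := fun f => max 0 ((M - obj f) / pen f))
        (fun f _ => le_max_left _ _) (Finset.mem_univ f)
    linarith
  refine ⟨lam₀, hlam₀_pos, fun lam hlam => ?_⟩
  set S : Set ℝ := {v : ℝ | ∃ x : Fin n → ℝ, (∀ i, x i = 0 ∨ x i = 1) ∧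
      v = (∑ i, c i * x i) + lam * ∑ j, (A.mulVec x j - b j) ^ 2} with hS
  have hSsub : S ⊆ Set.range (fun f => obj f + lam * pen f) := by
    rintro v ⟨x, hx, rfl⟩
    obtain ⟨f, hf⟩ := hrep x hx
    exact ⟨f, by simp [obj, pen, hf]⟩
  have hSfin : S.Finite := (Set.finite_range _).subset hSsub
  have hTS : T ⊆ S := by
    rintro v ⟨x, hx, hAx, rfl⟩
    exact ⟨x, hx, by simp [hAx]⟩
  have hSne : S.Nonempty := hTne.mono hTS
  apply le_antisymm
  · exact csInf_le_csInf hSfin.bddBelow hTne hTS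
  · refine le_csInf hSne ?_
    rintro v ⟨x, hx, rfl⟩
    obtain ⟨f, hf⟩ := hrep x hx
    have hv : (∑ i, c i * x i) + lam * ∑ j, (A.mulVec x j - b j) ^ 2
        = obj f + lam * pen f := by simp [obj, pen, hf]
    rw [hv]
    by_cases hp : pen f = 0
    · have := hM_le f (hpen_zero f hp)
      rw [hp]; linarith
    · have hppos : 0 < pen f := lt_of_le_of_ne (hpen_nonneg f) (Ne.symm hp)
      have h1 : (M - obj f) / pen f ≤ lam := le_trans (hlam₀_ge f) hlam
      have h2 : M - obj f ≤ lam * pen f := (div_le_iff₀ hppos).1 h1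
      linarith
end

section
/- Let c ∈ ℝ^n, A ∈ ℝ^{m×n}, and b ∈ ℝ^m, and suppose the feasible set {x ∈ {0,1}^n : Ax = b} is nonempty. Then there exists λ₀ > 0 such that for every λ ≥ λ₀, a binary point x ∈ {0,1}^n minimizes the penalized objective cᵀx + λ(Ax − b)ᵀ(Ax − b) over {0,1}^n if and only if x is feasible (Ax = b) and x minimizes cᵀx over all feasible binary points; i.e., the optimal solution sets of the QUBO reformulation and of the binary linear program coincide. -/
open Finset

private lemma qubo_pen_nonneg {m : ℕ} (v : Fin m → ℝ) : 0 ≤ ∑ j, (v j) ^ 2 :=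
  Finset.sum_nonneg fun j _ => sq_nonneg _

private lemma qubo_pen_zero_iff {m : ℕ} (v : Fin m → ℝ) :
    ∑ j, (v j) ^ 2 = 0 ↔ v = 0 := by
  rw [Finset.sum_eq_zero_iff_of_nonneg fun j _ => sq_nonneg (v j)]
  constructor
  · intro h; funext j; simpa [pow_eq_zero_iff] using h j (Finset.mem_univ j)
  · intro h j _; simp [h]

private lemma qubo_abs_obj_le {n : ℕ} (c x : Fin n → ℝ) (hx : ∀ i, x i = 0 ∨ x i = 1) :
    |∑ i, c i * x i| ≤ ∑ i, |c i| := by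
  calc |∑ i, c i * x i| ≤ ∑ i, |c i * x i| := Finset.abs_sum_le_sum_abs _ _
    _ ≤ ∑ i, |c i| := by
        apply Finset.sum_le_sum
        intro i _
        rcases hx i with h | h <;> simp [h, abs_mul]

/-- If the feasible set of the binary linear program is nonempty, then there
exists λ₀ > 0 such that for every λ ≥ λ₀, a binary point minimizes the penalized objective
over all binary points if and only if it is feasible and minimizes `cᵀx` over all feasible
binary points. -/
theorem qubo_penalized_minimizers_eq_constrained_minimizers {m n : ℕ}
    (c : Fin n → ℝ) (A : Matrix (Fin m) (Fin n) ℝ) (b : Fin m → ℝ)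
    (hfeas : ∃ x : Fin n → ℝ, (∀ i, x i = 0 ∨ x i = 1) ∧ A.mulVec x = b) :
    ∃ lam₀ : ℝ, 0 < lam₀ ∧ ∀ lam : ℝ, lam₀ ≤ lam →
      ∀ x : Fin n → ℝ, (∀ i, x i = 0 ∨ x i = 1) →
        ((∀ y : Fin n → ℝ, (∀ i, y i = 0 ∨ y i = 1) →
            (∑ i, c i * x i) + lam * ∑ j, (A.mulVec x j - b j) ^ 2 ≤
              (∑ i, c i * y i) + lam * ∑ j, (A.mulVec y j - b j) ^ 2) ↔
          (A.mulVec x = b ∧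
            ∀ y : Fin n → ℝ, (∀ i, y i = 0 ∨ y i = 1) → A.mulVec y = b →
              (∑ i, c i * x i) ≤ ∑ i, c i * y i)) := by
  classical
  obtain ⟨x₀, hx₀bin, hx₀feas⟩ := hfeas
  set P : (Fin n → ℝ) → ℝ := fun x => ∑ j, (A.mulVec x j - b j) ^ 2 with hP
  have hPnn : ∀ x, 0 ≤ P x := fun x => qubo_pen_nonneg _
  have hPzero : ∀ x, P x = 0 ↔ A.mulVec x = b := by
    intro x
    rw [hP]
    simp only
    rw [qubo_pen_zero_iff]
    constructor
    · intro h; funext j; have := congrFun h j; simpa [sub_eq_zero] using this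
    · intro h; funext j; simp [h]
  set B : ℝ := ∑ i, |c i| with hB
  have hBnn : 0 ≤ B := Finset.sum_nonneg fun i _ => abs_nonneg _
  -- finite set of binary points
  set S : Finset (Fin n → ℝ) :=
    Finset.image (fun f : Fin n → Bool => fun i => if f i then (1:ℝ) else 0) Finset.univ with hS
  have hmemS : ∀ x : Fin n → ℝ, (∀ i, x i = 0 ∨ x i = 1) → x ∈ S := by
    intro x hx
    rw [hS, Finset.mem_image]
    refine ⟨fun i => if x i = 1 then true else false, Finset.mem_univ _, ?_⟩
    funext i
    rcases hx i with h | h <;> simp [h]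
  set T : Finset (Fin n → ℝ) := S.filter (fun x => A.mulVec x ≠ b) with hT
  by_cases hTe : T.Nonempty
  · -- there exist infeasible binary points
    set δ : ℝ := T.inf' hTe P with hδ
    have hδpos : 0 < δ := by
      rw [hδ]
      rw [Finset.lt_inf'_iff]
      intro y hy
      rw [hT, Finset.mem_filter] at hy
      rcases lt_or_eq_of_le (hPnn y) with h | h
      · exact h
      · exact absurd ((hPzero y).mp h.symm) hy.2
    refine ⟨(2 * B + 1) / δ, by positivity, ?_⟩
    intro lam hlam x hxbin
    have hlampos : 0 < lam := lt_of_lt_of_le (by positivity) hlam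
    have key : ∀ y : Fin n → ℝ, (∀ i, y i = 0 ∨ y i = 1) → A.mulVec y ≠ b →
        2 * B + 1 ≤ lam * P y := by
      intro y hybin hyinf
      have hyT : y ∈ T := by rw [hT, Finset.mem_filter]; exact ⟨hmemS y hybin, hyinf⟩
      have hδle : δ ≤ P y := Finset.inf'_le _ hyT
      calc 2 * B + 1 = ((2 * B + 1) / δ) * δ := by field_simp
        _ ≤ lam * P y := by
            apply mul_le_mul hlam hδle (le_of_lt hδpos) (le_of_lt hlampos)
    have habs : ∀ y : Fin n → ℝ, (∀ i, y i = 0 ∨ y i = 1) →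
        -B ≤ ∑ i, c i * y i ∧ (∑ i, c i * y i) ≤ B :=
      fun y hy => abs_le.mp (qubo_abs_obj_le c y hy)
    constructor
    · intro hmin
      have hfx : A.mulVec x = b := by
        by_contra hxinf
        have h1 := hmin x₀ hx₀bin
        have hPx₀ : P x₀ = 0 := (hPzero x₀).mpr hx₀feas
        have h2 := key x hxbin hxinf
        have h3 := (habs x hxbin).1
        have h4 := (habs x₀ hx₀bin).2
        -- F x ≤ F x₀ = cᵀx₀ ≤ B, but F x ≥ -B + 2B+1 = B+1
        have : -B + (2 * B + 1) ≤ B := by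
          calc -B + (2 * B + 1) ≤ (∑ i, c i * x i) + lam * P x := add_le_add h3 h2
            _ ≤ (∑ i, c i * x₀ i) + lam * P x₀ := hmin x₀ hx₀bin
            _ = ∑ i, c i * x₀ i := by rw [hPx₀]; ring
            _ ≤ B := h4
        linarith
      refine ⟨hfx, ?_⟩
      intro y hybin hyfeas
      have h := hmin y hybin
      have hPx' : (∑ j, (A.mulVec x j - b j) ^ 2) = 0 := (hPzero x).mpr hfx
      have hPy' : (∑ j, (A.mulVec y j - b j) ^ 2) = 0 := (hPzero y).mpr hyfeas
      rw [hPx', hPy'] at h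
      linarith
    · rintro ⟨hfx, hminc⟩ y hybin
      have hPx : P x = 0 := (hPzero x).mpr hfx
      by_cases hyfeas : A.mulVec y = b
      · have hPy : P y = 0 := (hPzero y).mpr hyfeas
        have := hminc y hybin hyfeas
        rw [show (∑ j, (A.mulVec x j - b j) ^ 2) = P x from rfl,
            show (∑ j, (A.mulVec y j - b j) ^ 2) = P y from rfl, hPx, hPy]
        linarith
      · have h2 := key y hybin hyfeas
        have h3 := (habs x hxbin).2
        have h4 := (habs y hybin).1
        rw [show (∑ j, (A.mulVec x j - b j) ^ 2) = P x from rfl,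
            show (∑ j, (A.mulVec y j - b j) ^ 2) = P y from rfl, hPx]
        linarith
  · -- every binary point is feasible
    refine ⟨1, one_pos, ?_⟩
    intro lam hlam x hxbin
    have hall : ∀ y : Fin n → ℝ, (∀ i, y i = 0 ∨ y i = 1) → A.mulVec y = b := by
      intro y hy
      by_contra h
      exact hTe ⟨y, by rw [hT, Finset.mem_filter]; exact ⟨hmemS y hy, h⟩⟩
    have hfx := hall x hxbin
    have hPx : P x = 0 := (hPzero x).mpr hfx
    constructor
    · intro hmin
      refine ⟨hfx, ?_⟩
      intro y hybin hyfeas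
      have h := hmin y hybin
      have hPx' : (∑ j, (A.mulVec x j - b j) ^ 2) = 0 := hPx
      have hPy' : (∑ j, (A.mulVec y j - b j) ^ 2) = 0 := (hPzero y).mpr hyfeas
      rw [hPx', hPy'] at h
      linarith
    · rintro ⟨_, hminc⟩ y hybin
      have hyfeas := hall y hybin
      have := hminc y hybin hyfeas
      rw [show (∑ j, (A.mulVec x j - b j) ^ 2) = P x from rfl,
          show (∑ j, (A.mulVec y j - b j) ^ 2) = P y from rfl, hPx,
          (hPzero y).mpr hyfeas]
      linarith
end

section
/- Let c ∈ ℝ^n, Q ∈ ℝ^{n×n} symmetric, A ∈ ℝ^{m×n}, and b ∈ ℝ^m, and suppose the feasible set {x ∈ {0,1}^n : Ax = b} is nonempty. Then there exists λ₀ > 0 such that for every λ ≥ λ₀: (i) every minimizer over {0,1}^n of the penalized objective cᵀx + xᵀQx + λ(Ax − b)ᵀ(Ax − b) satisfies Ax = b, and (ii) the minimum of this penalized objective over {0,1}^n equals the minimum of cᵀx + xᵀQx over all feasible binary points; i.e., the QUBO reformulation of the binary quadratic program is exact. -/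
open Classical Finset

noncomputable def quboG {n : ℕ} (β : Fin n → Bool) : Fin n → ℝ := fun i => if β i then 1 else 0

noncomputable def quboF {n : ℕ} (c : Fin n → ℝ) (Q : Matrix (Fin n) (Fin n) ℝ)
    (x : Fin n → ℝ) : ℝ :=
  (∑ i, c i * x i) + (∑ i, ∑ j, x i * Q i j * x j)

noncomputable def quboP {m n : ℕ} (A : Matrix (Fin m) (Fin n) ℝ) (b : Fin m → ℝ)
    (x : Fin n → ℝ) : ℝ :=
  ∑ j, (A.mulVec x j - b j) ^ 2

lemma quboG_binary {n : ℕ} (β : Fin n → Bool) : ∀ i, quboG β i = 0 ∨ quboG β i = 1 := by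
  intro i; unfold quboG; by_cases h : β i <;> simp [h]

lemma quboG_surj {n : ℕ} (x : Fin n → ℝ) (hx : ∀ i, x i = 0 ∨ x i = 1) :
    ∃ β : Fin n → Bool, x = quboG β := by
  classical
  refine ⟨fun i => decide (x i = 1), funext fun i => ?_⟩
  rcases hx i with h | h <;> simp [quboG, h]

lemma quboP_nonneg {m n : ℕ} (A : Matrix (Fin m) (Fin n) ℝ) (b : Fin m → ℝ) (x : Fin n → ℝ) :
    0 ≤ quboP A b x := Finset.sum_nonneg fun j _ => sq_nonneg _

lemma quboP_pos {m n : ℕ} (A : Matrix (Fin m) (Fin n) ℝ) (b : Fin m → ℝ) (x : Fin n → ℝ)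
    (h : A.mulVec x ≠ b) : 0 < quboP A b x := by
  rcases (quboP_nonneg A b x).lt_or_eq with h' | h'
  · exact h'
  · exfalso; apply h; funext j
    have hz := (Finset.sum_eq_zero_iff_of_nonneg
      (fun j (_ : j ∈ Finset.univ) => sq_nonneg (A.mulVec x j - b j))).mp h'.symm
    have hj := hz j (Finset.mem_univ j)
    have := pow_eq_zero_iff (n := 2) (by norm_num) |>.mp hj
    linarith

lemma quboP_eq_zero {m n : ℕ} (A : Matrix (Fin m) (Fin n) ℝ) (b : Fin m → ℝ) (x : Fin n → ℝ)
    (h : A.mulVec x = b) : quboP A b x = 0 := by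
  unfold quboP; rw [h]; simp

/-- For the binary quadratic program with objective `cᵀx + xᵀQx` (Q symmetric)
and nonempty feasible set, there exists λ₀ > 0 such that for every λ ≥ λ₀: (i) every binary
minimizer of the penalized objective is feasible, and (ii) the minimum of the penalized
objective over binary points equals the constrained minimum; i.e., the QUBO reformulation
is exact. -/
theorem qubo_quadratic_reformulation_exact {m n : ℕ}
    (c : Fin n → ℝ) (Q : Matrix (Fin n) (Fin n) ℝ) (hQ : Q.IsSymm)
    (A : Matrix (Fin m) (Fin n) ℝ) (b : Fin m → ℝ)
    (hfeas : ∃ x : Fin n → ℝ, (∀ i, x i = 0 ∨ x i = 1) ∧ A.mulVec x = b) :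
    ∃ lam₀ : ℝ, 0 < lam₀ ∧ ∀ lam : ℝ, lam₀ ≤ lam →
      (∀ x : Fin n → ℝ, (∀ i, x i = 0 ∨ x i = 1) →
        (∀ y : Fin n → ℝ, (∀ i, y i = 0 ∨ y i = 1) →
          (∑ i, c i * x i) + (∑ i, ∑ j, x i * Q i j * x j)
              + lam * ∑ j, (A.mulVec x j - b j) ^ 2 ≤
            (∑ i, c i * y i) + (∑ i, ∑ j, y i * Q i j * y j)
              + lam * ∑ j, (A.mulVec y j - b j) ^ 2) →
        A.mulVec x = b) ∧
      sInf {v : ℝ | ∃ x : Fin n → ℝ, (∀ i, x i = 0 ∨ x i = 1) ∧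
          v = (∑ i, c i * x i) + (∑ i, ∑ j, x i * Q i j * x j)
              + lam * ∑ j, (A.mulVec x j - b j) ^ 2} =
        sInf {v : ℝ | ∃ x : Fin n → ℝ, (∀ i, x i = 0 ∨ x i = 1) ∧ A.mulVec x = b ∧
          v = (∑ i, c i * x i) + (∑ i, ∑ j, x i * Q i j * x j)} := by
  classical
  obtain ⟨x₀, hx₀b, hx₀f⟩ := hfeas
  obtain ⟨β₀, hβ₀⟩ := quboG_surj x₀ hx₀b
  set f : (Fin n → Bool) → ℝ := fun β => quboF c Q (quboG β) with hf
  set P : (Fin n → Bool) → ℝ := fun β => quboP A b (quboG β) with hP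
  set Feas : Finset (Fin n → Bool) :=
    Finset.univ.filter (fun β => A.mulVec (quboG β) = b) with hFeasdef
  have hne : Feas.Nonempty := ⟨β₀, by simp [hFeasdef, ← hβ₀, hx₀f]⟩
  set M : ℝ := Feas.inf' hne f with hMdef
  obtain ⟨βs, hβs, hβsM⟩ := Finset.exists_mem_eq_inf' hne f
  rw [← hMdef] at hβsM
  have hβsfeas : A.mulVec (quboG βs) = b := by
    simpa [hFeasdef] using hβs
  set Infeas : Finset (Fin n → Bool) :=
    Finset.univ.filter (fun β => ¬ A.mulVec (quboG β) = b) with hInfdef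
  set S : ℝ := ∑ β ∈ Infeas, max 0 ((M - f β) / P β) with hSdef
  have hSnn : 0 ≤ S := Finset.sum_nonneg fun _ _ => le_max_left _ _
  refine ⟨1 + S, by linarith, ?_⟩
  intro lam hlam
  -- key bound for infeasible β
  have key : ∀ β : Fin n → Bool, ¬ A.mulVec (quboG β) = b →
      M + P β ≤ f β + lam * P β := by
    intro β hβ
    have hPpos : 0 < P β := quboP_pos A b (quboG β) hβ
    have h1 : (M - f β) / P β ≤ S := by
      have hmem : β ∈ Infeas := by simp [hInfdef, hβ]
      calc (M - f β) / P β ≤ max 0 ((M - f β) / P β) := le_max_right _ _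
        _ ≤ S := Finset.single_le_sum
            (f := fun γ => max 0 ((M - f γ) / P γ))
            (fun γ _ => le_max_left _ _) hmem
    have h2 : M - f β ≤ S * P β := by
      have := mul_le_mul_of_nonneg_right h1 hPpos.le
      rwa [div_mul_cancel₀ _ hPpos.ne'] at this
    have h3 : (1 + S) * P β ≤ lam * P β := mul_le_mul_of_nonneg_right hlam hPpos.le
    nlinarith
  -- lower bound M for all binary points
  have lbound : ∀ β : Fin n → Bool, M ≤ f β + lam * P β := by
    intro β
    by_cases hβ : A.mulVec (quboG β) = b
    · have hM : M ≤ f β := Finset.inf'_le f (by simp [hFeasdef, hβ])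
      have hPz : P β = 0 := quboP_eq_zero A b (quboG β) hβ
      rw [hPz]; linarith
    · have := key β hβ
      have hPpos : 0 < P β := quboP_pos A b (quboG β) hβ
      linarith
  constructor
  · -- (i) minimizers are feasible
    intro x hx hmin
    obtain ⟨β, rfl⟩ := quboG_surj x hx
    by_contra hβ
    have hle := hmin (quboG βs) (quboG_binary βs)
    have hle' : f β + lam * P β ≤ f βs + lam * P βs := hle
    have hPz : P βs = 0 := quboP_eq_zero A b (quboG βs) hβsfeas
    have hPpos : 0 < P β := quboP_pos A b (quboG β) hβ
    have hk := key β hβ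
    have : f β + lam * P β ≤ M := by rw [hPz, mul_zero, add_zero] at hle'; linarith [hβsM ▸ hle']
    linarith
  · -- (ii) equality of infima
    have hS1 : sInf {v : ℝ | ∃ x : Fin n → ℝ, (∀ i, x i = 0 ∨ x i = 1) ∧
        v = (∑ i, c i * x i) + (∑ i, ∑ j, x i * Q i j * x j)
            + lam * ∑ j, (A.mulVec x j - b j) ^ 2} = M := by
      apply le_antisymm
      · apply csInf_le
        · exact ⟨M, fun v ⟨x, hx, hv⟩ => by
            obtain ⟨β, rfl⟩ := quboG_surj x hx
            have := lbound β
            rw [hv]; exact this⟩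
        · refine ⟨quboG βs, quboG_binary βs, ?_⟩
          have hPz : P βs = 0 := quboP_eq_zero A b (quboG βs) hβsfeas
          have : f βs + lam * P βs = M := by rw [hPz, mul_zero, add_zero]; exact hβsM.symm
          exact this.symm
      · apply le_csInf
        · refine ⟨f βs + lam * P βs, quboG βs, quboG_binary βs, rfl⟩
        · rintro v ⟨x, hx, hv⟩
          obtain ⟨β, rfl⟩ := quboG_surj x hx
          rw [hv]; exact lbound β
    have hS2 : sInf {v : ℝ | ∃ x : Fin n → ℝ, (∀ i, x i = 0 ∨ x i = 1) ∧ A.mulVec x = b ∧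
        v = (∑ i, c i * x i) + (∑ i, ∑ j, x i * Q i j * x j)} = M := by
      apply le_antisymm
      · apply csInf_le
        · refine ⟨M, fun v ⟨x, hx, hxf, hv⟩ => ?_⟩
          obtain ⟨β, rfl⟩ := quboG_surj x hx
          have : M ≤ f β := Finset.inf'_le f (by simp [hFeasdef, hxf])
          rw [hv]; exact this
        · exact ⟨quboG βs, quboG_binary βs, hβsfeas, hβsM⟩
      · apply le_csInf
        · exact ⟨f βs, quboG βs, quboG_binary βs, hβsfeas, rfl⟩
        · rintro v ⟨x, hx, hxf, hv⟩
          obtain ⟨β, rfl⟩ := quboG_surj x hx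
          have : M ≤ f β := Finset.inf'_le f (by simp [hFeasdef, hxf])
          rw [hv]; exact this
    rw [hS1, hS2]
end

section
/- Let n ≥ 1 and let f, d : Fin n → Fin n → ℝ be flow and distance parameters. There exists λ₀ > 0 such that for every λ ≥ λ₀: (i) the minimum over all binary x : Fin n → Fin n → {0,1} of the QAP QUBO objective Σ_{i,j,k,ℓ} f_{ij} d_{kℓ} x_{ik} x_{jℓ} + λ Σ_{k} (Σ_{i} x_{ik} − 1)² + λ Σ_{i} (Σ_{k} x_{ik} − 1)² equals the minimum over all permutations σ of {1,…,n} of Σ_{i,j} f_{ij} d_{σ(i)σ(j)}, and (ii) every binary minimizer of the QUBO objective is the permutation matrix of some permutation attaining that minimum; i.e., for sufficiently large λ the QUBO formulation of QAP produces provably optimal solutions of the original problem. -/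
open Finset

namespace QAP7

variable {n : ℕ}

noncomputable def Q (f d : Fin n → Fin n → ℝ) (x : Fin n → Fin n → ℝ) : ℝ :=
  ∑ i, ∑ j, ∑ k, ∑ l, f i j * d k l * x i k * x j l

noncomputable def F (f d : Fin n → Fin n → ℝ) (lam : ℝ) (x : Fin n → Fin n → ℝ) : ℝ :=
  Q f d x + lam * (∑ k, ((∑ i, x i k) - 1) ^ 2) + lam * (∑ i, ((∑ k, x i k) - 1) ^ 2)

def pm (σ : Equiv.Perm (Fin n)) : Fin n → Fin n → ℝ := fun i k => if σ i = k then 1 else 0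

noncomputable def cost (f d : Fin n → Fin n → ℝ) (σ : Equiv.Perm (Fin n)) : ℝ :=
  ∑ i, ∑ j, f i j * d (σ i) (σ j)

noncomputable def B (f d : Fin n → Fin n → ℝ) : ℝ :=
  ∑ i, ∑ j, ∑ k, ∑ l, |f i j| * |d k l|

lemma pm_binary (σ : Equiv.Perm (Fin n)) : ∀ i k, pm σ i k = 0 ∨ pm σ i k = 1 := by
  intro i k; unfold pm; split <;> simp

lemma pm_row (σ : Equiv.Perm (Fin n)) (i : Fin n) : ∑ k, pm σ i k = 1 := by
  simp [pm]

lemma pm_col (σ : Equiv.Perm (Fin n)) (k : Fin n) : ∑ i, pm σ i k = 1 := by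
  simp only [pm, Equiv.apply_eq_iff_eq_symm_apply]
  simp

lemma Q_pm (f d : Fin n → Fin n → ℝ) (σ : Equiv.Perm (Fin n)) :
    Q f d (pm σ) = cost f d σ := by
  unfold Q cost pm
  refine Finset.sum_congr rfl fun i _ => Finset.sum_congr rfl fun j _ => ?_
  simp [mul_ite, ite_mul, Finset.sum_ite_eq]

lemma F_pm (f d : Fin n → Fin n → ℝ) (lam : ℝ) (σ : Equiv.Perm (Fin n)) :
    F f d lam (pm σ) = cost f d σ := by
  unfold F
  rw [Q_pm]
  simp [pm_row, pm_col]

lemma sum_binary_nat {x : Fin n → ℝ} (h : ∀ k, x k = 0 ∨ x k = 1) :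
    ∃ m : ℕ, ∑ k, x k = m := by
  refine ⟨(univ.filter (fun k => x k = 1)).card, ?_⟩
  rw [← Finset.sum_boole]
  refine Finset.sum_congr rfl fun k _ => ?_
  rcases h k with h' | h' <;> simp [h']

lemma sq_ge_one {m : ℕ} (h : (m : ℝ) ≠ 1) : 1 ≤ ((m : ℝ) - 1) ^ 2 := by
  match m with
  | 0 => norm_num
  | 1 => simp at h
  | (k+2) =>
    have : (2 : ℝ) ≤ (k : ℝ) + 2 := by linarith [Nat.cast_nonneg (α := ℝ) k]
    push_cast
    nlinarith

/-- If binary x has all row and column sums equal to 1, it is a permutation matrix. -/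
lemma perm_of_doubly (x : Fin n → Fin n → ℝ) (hb : ∀ i k, x i k = 0 ∨ x i k = 1)
    (hrow : ∀ i, ∑ k, x i k = 1) (hcol : ∀ k, ∑ i, x i k = 1) :
    ∃ σ : Equiv.Perm (Fin n), ∀ i k, x i k = if σ i = k then 1 else 0 := by
  have hnn : ∀ i k, 0 ≤ x i k := by
    intro i k; rcases hb i k with h | h <;> simp [h]
  -- each row has an entry equal to 1
  have hex : ∀ i, ∃ k, x i k = 1 := by
    intro i
    by_contra hcon
    push_neg at hcon
    have : ∑ k, x i k = 0 := by
      refine Finset.sum_eq_zero fun k _ => ?_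
      rcases hb i k with h | h
      · exact h
      · exact absurd h (hcon k)
    rw [hrow i] at this; norm_num at this
  choose g hg using hex
  -- in each row, entries other than g i are zero
  have hzero : ∀ i k, k ≠ g i → x i k = 0 := by
    intro i k hk
    rcases hb i k with h | h
    · exact h
    · exfalso
      have hsub : ({k, g i} : Finset (Fin n)) ⊆ univ := subset_univ _
      have h2 : ∑ k' ∈ ({k, g i} : Finset (Fin n)), x i k' = 2 := by
        rw [Finset.sum_pair hk, h, hg i]; norm_num
      have hle : ∑ k' ∈ ({k, g i} : Finset (Fin n)), x i k' ≤ ∑ k', x i k' :=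
        Finset.sum_le_sum_of_subset_of_nonneg hsub (fun k' _ _ => hnn i k')
      rw [h2, hrow i] at hle
      norm_num at hle
  have hinj : Function.Injective g := by
    intro i1 i2 h12
    by_contra hne
    have hsub : ({i1, i2} : Finset (Fin n)) ⊆ univ := subset_univ _
    have h2 : ∑ i ∈ ({i1, i2} : Finset (Fin n)), x i (g i1) = 2 := by
      rw [Finset.sum_pair hne, hg i1]
      rw [h12, hg i2]; norm_num
    have hle : ∑ i ∈ ({i1, i2} : Finset (Fin n)), x i (g i1) ≤ ∑ i, x i (g i1) :=
      Finset.sum_le_sum_of_subset_of_nonneg hsub (fun i _ _ => hnn i (g i1))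
    rw [h2, hcol (g i1)] at hle
    norm_num at hle
  refine ⟨Equiv.ofBijective g (Finite.injective_iff_bijective.mp hinj), fun i k => ?_⟩
  simp only [Equiv.ofBijective_apply]
  by_cases h : g i = k
  · subst h; simp [hg i]
  · simp [h, hzero i k (fun hk => h hk.symm)]

lemma B_nonneg (f d : Fin n → Fin n → ℝ) : 0 ≤ B f d := by
  unfold B; positivity

lemma Q_ge (f d : Fin n → Fin n → ℝ) (x : Fin n → Fin n → ℝ)
    (hb : ∀ i k, x i k = 0 ∨ x i k = 1) : -(B f d) ≤ Q f d x := by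
  unfold Q B
  rw [← Finset.sum_neg_distrib]
  refine Finset.sum_le_sum fun i _ => ?_
  rw [← Finset.sum_neg_distrib]
  refine Finset.sum_le_sum fun j _ => ?_
  rw [← Finset.sum_neg_distrib]
  refine Finset.sum_le_sum fun k _ => ?_
  rw [← Finset.sum_neg_distrib]
  refine Finset.sum_le_sum fun l _ => ?_
  rcases hb i k with h | h <;> rcases hb j l with h' | h' <;>
    simp only [h, h', mul_zero, mul_one, zero_mul] <;>
    first
    | exact neg_nonpos_of_nonneg (by positivity)
    | (rw [← abs_mul]; exact neg_abs_le _)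

lemma cost_le (f d : Fin n → Fin n → ℝ) (σ : Equiv.Perm (Fin n)) :
    cost f d σ ≤ B f d := by
  unfold cost B
  refine Finset.sum_le_sum fun i _ => Finset.sum_le_sum fun j _ => ?_
  calc f i j * d (σ i) (σ j) ≤ |f i j * d (σ i) (σ j)| := le_abs_self _
    _ = |f i j| * |d (σ i) (σ j)| := abs_mul _ _
    _ ≤ ∑ k, ∑ l, |f i j| * |d k l| := by
        refine Finset.single_le_sum (f := fun k => ∑ l, |f i j| * |d k l|)
          (fun k _ => by positivity) (mem_univ (σ i)) |>.trans' ?_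
        exact Finset.single_le_sum (f := fun l => |f i j| * |d (σ i) l|)
          (fun l _ => by positivity) (mem_univ (σ j))

end QAP7

open Finset QAP7

/-- For n ≥ 1 and flow/distance parameters f, d, there exists λ₀ > 0 such
that for every λ ≥ λ₀: (i) the minimum over binary x of the QAP QUBO objective equals the
minimum over permutations σ of the assignment cost `Σ_{i,j} f_{ij} d_{σ(i)σ(j)}`, and
(ii) every binary minimizer of the QUBO objective is the permutation matrix of a
permutation attaining that minimum. -/
theorem qap_qubo_exact {n : ℕ} (hn : 1 ≤ n) (f d : Fin n → Fin n → ℝ) :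
    ∃ lam₀ : ℝ, 0 < lam₀ ∧ ∀ lam : ℝ, lam₀ ≤ lam →
      (sInf {v : ℝ | ∃ x : Fin n → Fin n → ℝ, (∀ i k, x i k = 0 ∨ x i k = 1) ∧
            v = (∑ i, ∑ j, ∑ k, ∑ l, f i j * d k l * x i k * x j l)
              + lam * (∑ k, ((∑ i, x i k) - 1) ^ 2)
              + lam * (∑ i, ((∑ k, x i k) - 1) ^ 2)} =
          sInf {v : ℝ | ∃ σ : Equiv.Perm (Fin n),
            v = ∑ i, ∑ j, f i j * d (σ i) (σ j)}) ∧
      (∀ x : Fin n → Fin n → ℝ, (∀ i k, x i k = 0 ∨ x i k = 1) →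
        (∀ y : Fin n → Fin n → ℝ, (∀ i k, y i k = 0 ∨ y i k = 1) →
          (∑ i, ∑ j, ∑ k, ∑ l, f i j * d k l * x i k * x j l)
              + lam * (∑ k, ((∑ i, x i k) - 1) ^ 2)
              + lam * (∑ i, ((∑ k, x i k) - 1) ^ 2) ≤
            (∑ i, ∑ j, ∑ k, ∑ l, f i j * d k l * y i k * y j l)
              + lam * (∑ k, ((∑ i, y i k) - 1) ^ 2)
              + lam * (∑ i, ((∑ k, y i k) - 1) ^ 2)) →
        ∃ σ : Equiv.Perm (Fin n), (∀ i k, x i k = if σ i = k then 1 else 0) ∧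
          ∀ τ : Equiv.Perm (Fin n),
            (∑ i, ∑ j, f i j * d (σ i) (σ j)) ≤ ∑ i, ∑ j, f i j * d (τ i) (τ j)) := by
  refine ⟨2 * B f d + 1, by linarith [B_nonneg f d], fun lam hlam => ?_⟩
  -- F applied to binary x with some sum ≠ 1 is large
  have key : ∀ x : Fin n → Fin n → ℝ, (∀ i k, x i k = 0 ∨ x i k = 1) →
      ¬ ((∀ i, ∑ k, x i k = 1) ∧ (∀ k, ∑ i, x i k = 1)) →
      B f d + 1 ≤ F f d lam x := by
    intro x hb hnot
    have hsq1 : ∀ i, (0:ℝ) ≤ ((∑ k, x i k) - 1) ^ 2 := fun i => sq_nonneg _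
    have hsq2 : ∀ k, (0:ℝ) ≤ ((∑ i, x i k) - 1) ^ 2 := fun k => sq_nonneg _
    have hcolnn : (0:ℝ) ≤ ∑ k, ((∑ i, x i k) - 1) ^ 2 :=
      Finset.sum_nonneg fun k _ => hsq2 k
    have hrownn : (0:ℝ) ≤ ∑ i, ((∑ k, x i k) - 1) ^ 2 :=
      Finset.sum_nonneg fun i _ => hsq1 i
    have hpen : 1 ≤ (∑ k, ((∑ i, x i k) - 1) ^ 2) + (∑ i, ((∑ k, x i k) - 1) ^ 2) := by
      rw [not_and_or] at hnot
      rcases hnot with h | h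
      · push_neg at h
        obtain ⟨i, hi⟩ := h
        obtain ⟨m, hm⟩ := sum_binary_nat (hb i)
        have h1 : 1 ≤ ((∑ k, x i k) - 1) ^ 2 := by
          rw [hm]; exact sq_ge_one (by rw [← hm]; exact hi)
        have := Finset.single_le_sum (f := fun i => ((∑ k, x i k) - 1) ^ 2)
          (fun i _ => hsq1 i) (mem_univ i)
        linarith
      · push_neg at h
        obtain ⟨k, hk⟩ := h
        obtain ⟨m, hm⟩ := sum_binary_nat (fun i => hb i k)
        have h1 : 1 ≤ ((∑ i, x i k) - 1) ^ 2 := by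
          rw [hm]; exact sq_ge_one (by rw [← hm]; exact hk)
        have := Finset.single_le_sum (f := fun k => ((∑ i, x i k) - 1) ^ 2)
          (fun k _ => hsq2 k) (mem_univ k)
        linarith
    have hQ := Q_ge f d x hb
    have hlam0 : (0:ℝ) ≤ lam := by linarith [B_nonneg f d]
    unfold F
    nlinarith [B_nonneg f d, mul_le_mul_of_nonneg_left hpen hlam0]
  -- F of binary x equals cost σ when sums are all 1
  have keyperm : ∀ x : Fin n → Fin n → ℝ, (∀ i k, x i k = 0 ∨ x i k = 1) →
      (∀ i, ∑ k, x i k = 1) → (∀ k, ∑ i, x i k = 1) →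
      ∃ σ : Equiv.Perm (Fin n), x = pm σ ∧ F f d lam x = cost f d σ := by
    intro x hb hr hc
    obtain ⟨σ, hσ⟩ := perm_of_doubly x hb hr hc
    have hx : x = pm σ := by funext i k; exact hσ i k
    exact ⟨σ, hx, by rw [hx, F_pm]⟩
  -- optimal permutation
  obtain ⟨σs, _, hσs⟩ := Finset.exists_min_image (univ : Finset (Equiv.Perm (Fin n)))
    (cost f d) ⟨1, mem_univ 1⟩
  have hσs' : ∀ τ, cost f d σs ≤ cost f d τ := fun τ => hσs τ (mem_univ τ)
  -- the two sets
  set S : Set ℝ := {v : ℝ | ∃ x : Fin n → Fin n → ℝ, (∀ i k, x i k = 0 ∨ x i k = 1) ∧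
            v = (∑ i, ∑ j, ∑ k, ∑ l, f i j * d k l * x i k * x j l)
              + lam * (∑ k, ((∑ i, x i k) - 1) ^ 2)
              + lam * (∑ i, ((∑ k, x i k) - 1) ^ 2)} with hS
  set T : Set ℝ := {v : ℝ | ∃ σ : Equiv.Perm (Fin n),
            v = ∑ i, ∑ j, f i j * d (σ i) (σ j)} with hT
  have hFv : ∀ x : Fin n → Fin n → ℝ,
      (∑ i, ∑ j, ∑ k, ∑ l, f i j * d k l * x i k * x j l)
              + lam * (∑ k, ((∑ i, x i k) - 1) ^ 2)
              + lam * (∑ i, ((∑ k, x i k) - 1) ^ 2) = F f d lam x := fun x => rfl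
  have hcostv : ∀ σ : Equiv.Perm (Fin n),
      (∑ i, ∑ j, f i j * d (σ i) (σ j)) = cost f d σ := fun σ => rfl
  -- lower bound for S
  have lbS : ∀ v ∈ S, cost f d σs ≤ v := by
    rintro v ⟨x, hb, rfl⟩
    rw [hFv]
    by_cases hdd : (∀ i, ∑ k, x i k = 1) ∧ (∀ k, ∑ i, x i k = 1)
    · obtain ⟨σ, _, hF⟩ := keyperm x hb hdd.1 hdd.2
      rw [hF]; exact hσs' σ
    · have := key x hb hdd
      have := cost_le f d σs
      linarith
  have memS : cost f d σs ∈ S := by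
    refine ⟨pm σs, pm_binary σs, ?_⟩
    rw [hFv, F_pm]
  constructor
  · -- sInf S = sInf T
    have h1 : sInf S = cost f d σs :=
      le_antisymm (csInf_le ⟨cost f d σs, lbS⟩ memS) (le_csInf ⟨_, memS⟩ lbS)
    have h2 : sInf T = cost f d σs := by
      refine le_antisymm (csInf_le ?_ ⟨σs, rfl⟩) (le_csInf ⟨_, ⟨σs, rfl⟩⟩ ?_)
      · exact ⟨cost f d σs, by rintro v ⟨τ, rfl⟩; exact hσs' τ⟩
      · rintro v ⟨τ, rfl⟩; exact hσs' τ
    rw [h1, h2]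
  · -- minimizers
    intro x hb hmin
    have hle : F f d lam x ≤ cost f d σs := by
      have := hmin (pm σs) (pm_binary σs)
      rw [hFv, hFv, F_pm] at this
      exact this
    by_cases hdd : (∀ i, ∑ k, x i k = 1) ∧ (∀ k, ∑ i, x i k = 1)
    · obtain ⟨σ, hx, hF⟩ := keyperm x hb hdd.1 hdd.2
      refine ⟨σ, fun i k => by rw [hx]; rfl, fun τ => ?_⟩
      have := hmin (pm τ) (pm_binary τ)
      rw [hFv, hFv, F_pm, hF] at this
      exact this
    · exfalso
      have := key x hb hdd
      have := cost_le f d σs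
      linarith
end

section
/- Let G = (V, E) be a finite simple graph whose vertex set is partitioned into clusters V₁,…,V_P, with P available colors, and let x : V × {1,…,P} → ℝ and y : {1,…,P} → ℝ take values in {0,1}. Define the unit penalty Pen(x,y) = Σ_{p=1}^P (1 − Σ_{i∈V_p} Σ_{k=1}^P x_{ik})² + Σ_{{i,j}∈E} Σ_{k=1}^P x_{ik} x_{jk} + Σ_{i∈V} Σ_{k=1}^P (x_{ik} − y_k) x_{ik}. Then Pen(x,y) ≥ 0 for all binary (x,y); Pen(x,y) = 0 if and only if (x,y) satisfies the Sel-Col constraints (exactly one selected-and-colored vertex per cluster, no monochromatic edge, and x_{ik} ≤ y_k for all i and k); and if (x,y) violates any of these constraints then Pen(x,y) ≥ 1. -/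
/-- The Sel-Col unit penalty
`Pen(x,y) = Σ_p (1 − Σ_{i∈V_p} Σ_k x_{ik})² + Σ_{{i,j}∈E} Σ_k x_{ik} x_{jk}
            + Σ_i Σ_k (x_{ik} − y_k) x_{ik}`. -/
noncomputable def selColPen {V : Type*} [Fintype V] [DecidableEq V] (G : SimpleGraph V)
    [DecidableRel G.Adj] {P : ℕ} (Vp : Fin P → Finset V)
    (x : V → Fin P → ℝ) (y : Fin P → ℝ) : ℝ :=
  (∑ p, (1 - ∑ i ∈ Vp p, ∑ k, x i k) ^ 2)
    + (∑ e ∈ G.edgeFinset, ∑ k,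
        Sym2.lift ⟨fun i j => x i k * x j k, fun i j => mul_comm (x i k) (x j k)⟩ e)
    + ∑ i, ∑ k, (x i k - y k) * x i k

/-- The Sel-Col constraints: exactly one selected-and-colored vertex per cluster, no
monochromatic edge, and `x_{ik} ≤ y_k` for all i, k. -/
def selColFeasible {V : Type*} (G : SimpleGraph V) {P : ℕ} (Vp : Fin P → Finset V)
    (x : V → Fin P → ℝ) (y : Fin P → ℝ) : Prop :=
  (∀ p, ∑ i ∈ Vp p, ∑ k, x i k = 1) ∧
    (∀ i j, G.Adj i j → ∀ k, x i k + x j k ≤ 1) ∧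
    (∀ i k, x i k ≤ y k)

/-! Every summand of the penalty is `0` when its constraint holds and at least `1` otherwise
(for the cluster terms because the cluster counts are natural numbers), and this dichotomy
survives finite sums of nonnegative terms. -/

def IsUnitPenalty (t : ℝ) (Q : Prop) : Prop :=
  0 ≤ t ∧ (t = 0 ↔ Q) ∧ (¬ Q → 1 ≤ t)

namespace IsUnitPenalty

theorem of_iff {t : ℝ} {Q R : Prop} (h : IsUnitPenalty t Q) (hQR : Q ↔ R) :
    IsUnitPenalty t R := by
  rwa [← propext hQR]

theorem add {s t : ℝ} {Q R : Prop} (hs : IsUnitPenalty s Q) (ht : IsUnitPenalty t R) :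
    IsUnitPenalty (s + t) (Q ∧ R) := by
  obtain ⟨hs0, hsQ, hs1⟩ := hs
  obtain ⟨ht0, htR, ht1⟩ := ht
  refine ⟨add_nonneg hs0 ht0, ?_, fun h => ?_⟩
  · rw [← hsQ, ← htR]
    constructor
    · intro h; constructor <;> linarith
    · rintro ⟨rfl, rfl⟩; simp
  · by_cases hQ : Q
    · linarith [ht1 fun hR => h ⟨hQ, hR⟩]
    · linarith [hs1 hQ]

theorem sum {ι : Type*} (s : Finset ι) {f : ι → ℝ} {Q : ι → Prop}
    (h : ∀ i ∈ s, IsUnitPenalty (f i) (Q i)) :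
    IsUnitPenalty (∑ i ∈ s, f i) (∀ i ∈ s, Q i) := by
  classical
  induction s using Finset.induction_on with
  | empty => simp [IsUnitPenalty]
  | insert a s ha ih =>
    rw [Finset.sum_insert ha]
    refine ((h a (s.mem_insert_self a)).add (ih fun i hi => h i (s.mem_insert_of_mem hi))).of_iff ?_
    simp only [Finset.forall_mem_insert]

theorem sum_univ {ι : Type*} [Fintype ι] {f : ι → ℝ} {Q : ι → Prop}
    (h : ∀ i, IsUnitPenalty (f i) (Q i)) : IsUnitPenalty (∑ i, f i) (∀ i, Q i) :=
  (sum Finset.univ fun i _ => h i).of_iff (by simp only [Finset.mem_univ, forall_const])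

end IsUnitPenalty

theorem exists_nat_eq_sum {ι : Type*} (s : Finset ι) (f : ι → ℝ)
    (h : ∀ i ∈ s, ∃ n : ℕ, f i = n) : ∃ n : ℕ, ∑ i ∈ s, f i = n :=
  Finset.sum_induction f (fun r => ∃ n : ℕ, r = n)
    (by rintro _ _ ⟨m, rfl⟩ ⟨n, rfl⟩; exact ⟨m + n, by push_cast; rfl⟩) ⟨0, by simp⟩ h

theorem isUnitPenalty_one_sub_sq {s : ℝ} (hs : ∃ n : ℕ, s = n) :
    IsUnitPenalty ((1 - s) ^ 2) (s = 1) := by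
  obtain ⟨n, rfl⟩ := hs
  refine ⟨sq_nonneg _, by rw [sq_eq_zero_iff, sub_eq_zero, eq_comm], fun hn => ?_⟩
  rcases Nat.lt_or_gt_of_ne (mod_cast hn : n ≠ 1) with h0 | h2
  · simp [Nat.lt_one_iff.mp h0]
  · have : (2 : ℝ) ≤ n := mod_cast h2
    nlinarith

section Binary

variable {a b : ℝ}

theorem isUnitPenalty_mul (ha : a = 0 ∨ a = 1) (hb : b = 0 ∨ b = 1) :
    IsUnitPenalty (a * b) (a + b ≤ 1) := by
  rcases ha with rfl | rfl <;> rcases hb with rfl | rfl <;> norm_num [IsUnitPenalty]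

theorem isUnitPenalty_sub_mul (ha : a = 0 ∨ a = 1) (hb : b = 0 ∨ b = 1) :
    IsUnitPenalty ((a - b) * a) (a ≤ b) := by
  rcases ha with rfl | rfl <;> rcases hb with rfl | rfl <;> norm_num [IsUnitPenalty]

end Binary

section SelCol

variable {V : Type*} {P : ℕ} {x : V → Fin P → ℝ} {y : Fin P → ℝ}

theorem isUnitPenalty_cluster_sum (hx : ∀ i k, x i k = 0 ∨ x i k = 1) (Vp : Fin P → Finset V) :
    IsUnitPenalty (∑ p, (1 - ∑ i ∈ Vp p, ∑ k, x i k) ^ 2) (∀ p, ∑ i ∈ Vp p, ∑ k, x i k = 1) := by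
  refine IsUnitPenalty.sum_univ fun p => isUnitPenalty_one_sub_sq ?_
  refine exists_nat_eq_sum _ _ fun i _ => exists_nat_eq_sum _ _ fun k _ => ?_
  rcases hx i k with h | h
  · exact ⟨0, by simp [h]⟩
  · exact ⟨1, by simp [h]⟩

theorem isUnitPenalty_lift_mul (hx : ∀ i k, x i k = 0 ∨ x i k = 1) (k : Fin P) (e : Sym2 V) :
    IsUnitPenalty (Sym2.lift ⟨fun i j => x i k * x j k, fun i j => mul_comm (x i k) (x j k)⟩ e)
      (∀ i j, s(i, j) = e → x i k + x j k ≤ 1) := by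
  induction e using Sym2.ind with
  | _ a b =>
    refine (isUnitPenalty_mul (hx a k) (hx b k)).of_iff ⟨fun h i j hij => ?_, fun h => h a b rfl⟩
    rcases Sym2.eq_iff.mp hij with ⟨rfl, rfl⟩ | ⟨rfl, rfl⟩
    · exact h
    · rwa [add_comm]

theorem isUnitPenalty_edge_sum (hx : ∀ i k, x i k = 0 ∨ x i k = 1) (G : SimpleGraph V)
    [Fintype G.edgeSet] :
    IsUnitPenalty (∑ e ∈ G.edgeFinset, ∑ k,
        Sym2.lift ⟨fun i j => x i k * x j k, fun i j => mul_comm (x i k) (x j k)⟩ e)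
      (∀ i j, G.Adj i j → ∀ k, x i k + x j k ≤ 1) := by
  refine (IsUnitPenalty.sum _ fun e _ =>
    IsUnitPenalty.sum_univ fun k => isUnitPenalty_lift_mul hx k e).of_iff ⟨?_, ?_⟩
  · exact fun h i j hij k => h _ (G.mem_edgeFinset.mpr hij) k i j rfl
  · rintro h e he k i j rfl
    exact h i j (G.mem_edgeFinset.mp he) k

theorem isUnitPenalty_vertex_sum [Fintype V] (hx : ∀ i k, x i k = 0 ∨ x i k = 1)
    (hy : ∀ k, y k = 0 ∨ y k = 1) :
    IsUnitPenalty (∑ i, ∑ k, (x i k - y k) * x i k) (∀ i k, x i k ≤ y k) :=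
  IsUnitPenalty.sum_univ fun i => IsUnitPenalty.sum_univ fun k =>
    isUnitPenalty_sub_mul (hx i k) (hy k)

end SelCol

theorem selcol_penalty_properties_general {V : Type*} [Fintype V] [DecidableEq V]
    (G : SimpleGraph V) [DecidableRel G.Adj] {P : ℕ} (Vp : Fin P → Finset V)
    (x : V → Fin P → ℝ) (y : Fin P → ℝ)
    (hx : ∀ i k, x i k = 0 ∨ x i k = 1) (hy : ∀ k, y k = 0 ∨ y k = 1) :
    0 ≤ selColPen G Vp x y ∧
      (selColPen G Vp x y = 0 ↔ selColFeasible G Vp x y) ∧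
      (¬ selColFeasible G Vp x y → 1 ≤ selColPen G Vp x y) :=
  (((isUnitPenalty_cluster_sum hx Vp).add (isUnitPenalty_edge_sum hx G)).add
    (isUnitPenalty_vertex_sum hx hy)).of_iff and_assoc

/-- For binary (x, y), the Sel-Col unit penalty is nonnegative; it vanishes
exactly when (x, y) satisfies the Sel-Col constraints; and it is at least 1 whenever some
constraint is violated. -/
theorem selcol_penalty_properties {V : Type*} [Fintype V] [DecidableEq V]
    (G : SimpleGraph V) [DecidableRel G.Adj] {P : ℕ} (Vp : Fin P → Finset V)
    (hdisj : ∀ p q, p ≠ q → Disjoint (Vp p) (Vp q))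
    (hcover : ∀ v : V, ∃ p, v ∈ Vp p)
    (x : V → Fin P → ℝ) (y : Fin P → ℝ)
    (hx : ∀ i k, x i k = 0 ∨ x i k = 1) (hy : ∀ k, y k = 0 ∨ y k = 1) :
    0 ≤ selColPen G Vp x y ∧
      (selColPen G Vp x y = 0 ↔ selColFeasible G Vp x y) ∧
      (¬ selColFeasible G Vp x y → 1 ≤ selColPen G Vp x y) :=
  selcol_penalty_properties_general G Vp x y hx hy
end

section
/- Let G = (V, E) be a finite simple graph whose vertex set is partitioned into nonempty clusters V₁,…,V_P, with P available colors, and let λ > P be a real penalty coefficient. Consider the Sel-Col QUBO objective F_λ(x,y) = Σ_{k=1}^P y_k + λ Σ_{p=1}^P (1 − Σ_{i∈V_p} Σ_{k=1}^P x_{ik})² + λ Σ_{{i,j}∈E} Σ_{k=1}^P x_{ik} x_{jk} + λ Σ_{i∈V} Σ_{k=1}^P (x_{ik} − y_k) x_{ik} over binary x and y. Then every minimizer of F_λ over binary (x,y) satisfies all Sel-Col constraints, and the minimum of F_λ over binary (x,y) equals the optimal value of the Sel-Col integer program (the minimum of Σ_{k=1}^P y_k over binary (x,y) satisfying the Sel-Col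 constraints); i.e., for λ > P the QUBO formulation of Sel-Col is exact. -/
/-! For binary `(x, y)` the penalty is a nonnegative integer, and it vanishes exactly when the
Sel-Col constraints hold. Hence an infeasible binary point has penalty at least `1` and QUBO value
above `λ > P`, while giving one representative of each cluster its own color is a feasible point of
value `P`. Since a feasible point has QUBO value equal to its number of colors, no infeasible point
is a minimizer and both infima agree. -/

section Binary

variable {a b : ℝ}

lemma nonneg_of_binary (ha : a = 0 ∨ a = 1) : 0 ≤ a := by
  rcases ha with rfl | rfl <;> norm_num

lemma mul_eq_zero_iff_add_le_one_of_binary (ha : a = 0 ∨ a = 1) (hb : b = 0 ∨ b = 1) :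
    a * b = 0 ↔ a + b ≤ 1 := by
  rcases ha with rfl | rfl <;> rcases hb with rfl | rfl <;> norm_num

lemma sub_mul_self_nonneg_of_binary (ha : a = 0 ∨ a = 1) (hb : b = 0 ∨ b = 1) :
    0 ≤ (a - b) * a := by
  rcases ha with rfl | rfl <;> rcases hb with rfl | rfl <;> norm_num

lemma sub_mul_self_eq_zero_iff_le_of_binary (ha : a = 0 ∨ a = 1) (hb : b = 0 ∨ b = 1) :
    (a - b) * a = 0 ↔ a ≤ b := by
  rcases ha with rfl | rfl <;> rcases hb with rfl | rfl <;> norm_num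

lemma mem_bot_of_binary (ha : a = 0 ∨ a = 1) : a ∈ (⊥ : Subring ℝ) := by
  rcases ha with rfl | rfl
  exacts [zero_mem _, one_mem _]

end Binary

theorem Sym2.lift_mul_nonneg {V : Type*} {f : V → ℝ} (hf : ∀ i, 0 ≤ f i) (e : Sym2 V) :
    0 ≤ Sym2.lift ⟨fun i j ↦ f i * f j, fun i j ↦ mul_comm (f i) (f j)⟩ e := by
  induction e using Sym2.ind with
  | _ i j => exact mul_nonneg (hf i) (hf j)

section SelCol

variable {V : Type*} (G : SimpleGraph V) {P : ℕ} (Vp : Fin P → Finset V)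

theorem exists_selColFeasible_sum_eq (hdisj : ∀ p q, p ≠ q → Disjoint (Vp p) (Vp q))
    (hne : ∀ p, (Vp p).Nonempty) :
    ∃ (x : V → Fin P → ℝ) (y : Fin P → ℝ),
      (∀ i k, x i k = 0 ∨ x i k = 1) ∧ (∀ k, y k = 0 ∨ y k = 1) ∧
      selColFeasible G Vp x y ∧ ∑ k, y k = P := by
  classical
  choose rep hrep using hne
  have hrep_mem : ∀ k p, rep k ∈ Vp p ↔ k = p := fun k p ↦
    ⟨fun h ↦ by_contra fun hkp ↦ Finset.disjoint_left.1 (hdisj k p hkp) (hrep k) h,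
      fun h ↦ h ▸ hrep k⟩
  refine ⟨fun i k ↦ if i = rep k then 1 else 0, fun _ ↦ 1, fun i k ↦ ?_, fun _ ↦ Or.inr rfl,
    ⟨fun p ↦ ?_, fun i j hij k ↦ ?_, fun i k ↦ ?_⟩, by simp⟩
  · by_cases h : i = rep k <;> simp [h]
  · rw [Finset.sum_comm]
    simp [hrep_mem]
  · by_cases hi : i = rep k <;> by_cases hj : j = rep k <;> simp [hi, hj]
    exact absurd (hi.trans hj.symm) hij.ne
  · by_cases h : i = rep k <;> simp [h]

variable [Fintype V] [DecidableEq V] [DecidableRel G.Adj] {x : V → Fin P → ℝ} {y : Fin P → ℝ}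

theorem selColPen_mem (S : Subring ℝ) (hx : ∀ i k, x i k ∈ S) (hy : ∀ k, y k ∈ S) :
    selColPen G Vp x y ∈ S := by
  refine add_mem (add_mem ?_ ?_) ?_
  · exact sum_mem fun p _ ↦
      pow_mem (sub_mem (one_mem S) (sum_mem fun i _ ↦ sum_mem fun k _ ↦ hx i k)) 2
  · refine sum_mem fun e _ ↦ sum_mem fun k _ ↦ ?_
    induction e using Sym2.ind with
    | _ i j => exact mul_mem (hx i k) (hx j k)
  · exact sum_mem fun i _ ↦ sum_mem fun k _ ↦ mul_mem (sub_mem (hx i k) (hy k)) (hx i k)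

theorem selColPen_nonneg (hx : ∀ i k, x i k = 0 ∨ x i k = 1) (hy : ∀ k, y k = 0 ∨ y k = 1) :
    0 ≤ selColPen G Vp x y := by
  refine add_nonneg (add_nonneg ?_ ?_) ?_ <;> refine Finset.sum_nonneg fun _ _ ↦ ?_
  · exact sq_nonneg _
  · exact Finset.sum_nonneg fun k _ ↦ Sym2.lift_mul_nonneg (fun i ↦ nonneg_of_binary (hx i k)) _
  · exact Finset.sum_nonneg fun k _ ↦ sub_mul_self_nonneg_of_binary (hx _ k) (hy k)

theorem selColPen_eq_zero_iff (hx : ∀ i k, x i k = 0 ∨ x i k = 1)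
    (hy : ∀ k, y k = 0 ∨ y k = 1) :
    selColPen G Vp x y = 0 ↔ selColFeasible G Vp x y := by
  have hedge : ∀ (e : Sym2 V) k,
      0 ≤ Sym2.lift ⟨fun i j ↦ x i k * x j k, fun i j ↦ mul_comm (x i k) (x j k)⟩ e :=
    fun e k ↦ Sym2.lift_mul_nonneg (fun i ↦ nonneg_of_binary (hx i k)) e
  have hcolor : ∀ i k, 0 ≤ (x i k - y k) * x i k := fun i k ↦
    sub_mul_self_nonneg_of_binary (hx i k) (hy k)
  simp (maxDischargeDepth := 6) only [selColPen, selColFeasible, add_eq_zero_iff_of_nonneg,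
    add_nonneg, Finset.sum_eq_zero_iff_of_nonneg, Finset.sum_nonneg, sq_nonneg, hedge, hcolor,
    implies_true, Finset.mem_univ, true_implies, SimpleGraph.mem_edgeFinset, Sym2.forall,
    SimpleGraph.mem_edgeSet, Sym2.lift_mk, pow_eq_zero_iff two_ne_zero, sub_eq_zero,
    eq_comm (a := (1 : ℝ)), mul_eq_zero_iff_add_le_one_of_binary,
    sub_mul_self_eq_zero_iff_le_of_binary, hx, hy, and_assoc]

theorem one_le_selColPen_of_not_selColFeasible (hx : ∀ i k, x i k = 0 ∨ x i k = 1)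
    (hy : ∀ k, y k = 0 ∨ y k = 1) (hinf : ¬ selColFeasible G Vp x y) :
    1 ≤ selColPen G Vp x y := by
  obtain ⟨n, hn⟩ := Subring.mem_bot.1 <|
    selColPen_mem G Vp ⊥ (fun i k ↦ mem_bot_of_binary (hx i k)) fun k ↦ mem_bot_of_binary (hy k)
  have hpos : (0 : ℝ) < n := hn ▸ (selColPen_nonneg G Vp hx hy).lt_of_ne'
    (mt (selColPen_eq_zero_iff G Vp hx hy).1 hinf)
  rw [← hn]
  exact_mod_cast (Int.cast_pos.1 hpos : 0 < n)

theorem natCast_lt_of_not_selColFeasible {lam : ℝ} (hlam : (P : ℝ) < lam)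
    (hx : ∀ i k, x i k = 0 ∨ x i k = 1) (hy : ∀ k, y k = 0 ∨ y k = 1)
    (hinf : ¬ selColFeasible G Vp x y) :
    (P : ℝ) < (∑ k, y k) + lam * selColPen G Vp x y :=
  calc (P : ℝ) < lam * 1 := by rwa [mul_one]
    _ ≤ lam * selColPen G Vp x y := by
      gcongr
      · exact (Nat.cast_nonneg P).trans hlam.le
      · exact one_le_selColPen_of_not_selColFeasible G Vp hx hy hinf
    _ ≤ (∑ k, y k) + lam * selColPen G Vp x y :=
      le_add_of_nonneg_left (Finset.sum_nonneg fun k _ ↦ nonneg_of_binary (hy k))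

end SelCol

theorem selcol_qubo_exact_general {V : Type*} [Fintype V] [DecidableEq V]
    (G : SimpleGraph V) [DecidableRel G.Adj] {P : ℕ} (Vp : Fin P → Finset V)
    (hdisj : ∀ p q, p ≠ q → Disjoint (Vp p) (Vp q))
    (hne : ∀ p, (Vp p).Nonempty)
    (lam : ℝ) (hlam : (P : ℝ) < lam) :
    (∀ (x : V → Fin P → ℝ) (y : Fin P → ℝ),
      (∀ i k, x i k = 0 ∨ x i k = 1) → (∀ k, y k = 0 ∨ y k = 1) →
      (∀ (x' : V → Fin P → ℝ) (y' : Fin P → ℝ),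
        (∀ i k, x' i k = 0 ∨ x' i k = 1) → (∀ k, y' k = 0 ∨ y' k = 1) →
        (∑ k, y k) + lam * selColPen G Vp x y ≤
          (∑ k, y' k) + lam * selColPen G Vp x' y') →
      selColFeasible G Vp x y) ∧
    sInf {v : ℝ | ∃ (x : V → Fin P → ℝ) (y : Fin P → ℝ),
        (∀ i k, x i k = 0 ∨ x i k = 1) ∧ (∀ k, y k = 0 ∨ y k = 1) ∧
        v = (∑ k, y k) + lam * selColPen G Vp x y} =
      sInf {v : ℝ | ∃ (x : V → Fin P → ℝ) (y : Fin P → ℝ),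
        (∀ i k, x i k = 0 ∨ x i k = 1) ∧ (∀ k, y k = 0 ∨ y k = 1) ∧
        selColFeasible G Vp x y ∧ v = ∑ k, y k} := by
  obtain ⟨x₀, y₀, hx₀, hy₀, hfeas₀, hsum₀⟩ := exists_selColFeasible_sum_eq G Vp hdisj hne
  have hqubo_feas : ∀ {x y}, (∀ i k, x i k = 0 ∨ x i k = 1) → (∀ k, y k = 0 ∨ y k = 1) →
      selColFeasible G Vp x y → (∑ k, y k) + lam * selColPen G Vp x y = ∑ k, y k :=
    fun hx hy hfeas ↦ by rw [(selColPen_eq_zero_iff G Vp hx hy).2 hfeas, mul_zero, add_zero]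
  have hqubo₀ : (∑ k, y₀ k) + lam * selColPen G Vp x₀ y₀ = P := by
    rw [hqubo_feas hx₀ hy₀ hfeas₀, hsum₀]
  refine ⟨fun x y hx hy hmin ↦ by_contra fun hinf ↦ ?_, csInf_eq_csInf_of_forall_exists_le ?_ ?_⟩
  · exact (natCast_lt_of_not_selColFeasible G Vp hlam hx hy hinf).not_ge
      (hqubo₀ ▸ hmin x₀ y₀ hx₀ hy₀)
  · rintro _ ⟨x, y, hx, hy, rfl⟩
    by_cases hfeas : selColFeasible G Vp x y
    · exact ⟨_, ⟨x, y, hx, hy, hfeas, rfl⟩, (hqubo_feas hx hy hfeas).ge⟩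
    · exact ⟨P, ⟨x₀, y₀, hx₀, hy₀, hfeas₀, hsum₀.symm⟩,
        (natCast_lt_of_not_selColFeasible G Vp hlam hx hy hfeas).le⟩
  · rintro _ ⟨x, y, hx, hy, hfeas, rfl⟩
    exact ⟨_, ⟨x, y, hx, hy, rfl⟩, (hqubo_feas hx hy hfeas).le⟩

/-- For λ > P, every binary minimizer of the Sel-Col QUBO objective
`F_λ(x,y) = Σ_k y_k + λ·Pen(x,y)` satisfies all Sel-Col constraints, and the minimum of
`F_λ` over binary (x, y) equals the optimal value of the Sel-Col integer program; i.e.,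
the QUBO formulation of Sel-Col is exact. -/
theorem selcol_qubo_exact {V : Type*} [Fintype V] [DecidableEq V]
    (G : SimpleGraph V) [DecidableRel G.Adj] {P : ℕ} (Vp : Fin P → Finset V)
    (hdisj : ∀ p q, p ≠ q → Disjoint (Vp p) (Vp q))
    (hcover : ∀ v : V, ∃ p, v ∈ Vp p)
    (hne : ∀ p, (Vp p).Nonempty)
    (lam : ℝ) (hlam : (P : ℝ) < lam) :
    (∀ (x : V → Fin P → ℝ) (y : Fin P → ℝ),
      (∀ i k, x i k = 0 ∨ x i k = 1) → (∀ k, y k = 0 ∨ y k = 1) →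
      (∀ (x' : V → Fin P → ℝ) (y' : Fin P → ℝ),
        (∀ i k, x' i k = 0 ∨ x' i k = 1) → (∀ k, y' k = 0 ∨ y' k = 1) →
        (∑ k, y k) + lam * selColPen G Vp x y ≤
          (∑ k, y' k) + lam * selColPen G Vp x' y') →
      selColFeasible G Vp x y) ∧
    sInf {v : ℝ | ∃ (x : V → Fin P → ℝ) (y : Fin P → ℝ),
        (∀ i k, x i k = 0 ∨ x i k = 1) ∧ (∀ k, y k = 0 ∨ y k = 1) ∧
        v = (∑ k, y k) + lam * selColPen G Vp x y} =
      sInf {v : ℝ | ∃ (x : V → Fin P → ℝ) (y : Fin P → ℝ),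
        (∀ i k, x i k = 0 ∨ x i k = 1) ∧ (∀ k, y k = 0 ∨ y k = 1) ∧
        selColFeasible G Vp x y ∧ v = ∑ k, y k} :=
  selcol_qubo_exact_general G Vp hdisj hne lam hlam
end
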